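/- arXiv:1401.7781 — 5 statements merged into one kernel-verified Lean document; each statement's English description precedes it below -/
import Mathlib

section
/- The closed unit disk in ℝ² cannot be partitioned into two disjoint congruent pieces; that is, there is no decomposition D = A ∪ B with A ∩ B = ∅ and an isometry φ of ℝ² with φ(A) = B. -/
/-!
Suppose `φ` maps `A` onto `B`, where `A ∪ B` is the unit ball and, say, `0 ∈ A`, so that
`c := φ 0 ∈ B` is nonzero. Every point of `B` lies within distance `1` of `c`, while a unit
vector `x ⊥ c` has distance `√(1 + ‖c‖²) > 1` from `c`; hence `x` and `-x` lie in `A`. Their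
images are two points of the unit ball at distance `2`, hence antipodal, so their midpoint
`φ 0 = c` (isometries preserve midpoints) is `0`, a contradiction.
-/

open Metric Module
open scoped InnerProductSpace

variable {E : Type*} [NormedAddCommGroup E] [InnerProductSpace ℝ E]

lemma exists_norm_eq_one_inner_eq_zero [FiniteDimensional ℝ E] (hE : 2 ≤ finrank ℝ E) (c : E) :
    ∃ x : E, ‖x‖ = 1 ∧ ⟪x, c⟫_ℝ = 0 := by
  have hspan : finrank ℝ (ℝ ∙ c) ≤ 1 := by
    simpa using finrank_span_le_card (R := ℝ) ({c} : Set E)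
  have hperp : (ℝ ∙ c)ᗮ ≠ ⊥ := by
    rw [← Submodule.one_le_finrank_iff]
    have := (ℝ ∙ c).finrank_add_finrank_orthogonal
    omega
  obtain ⟨y, hy, hy0⟩ := Submodule.exists_mem_ne_zero_of_ne_bot hperp
  exact ⟨(‖y‖⁻¹ : ℝ) • y, norm_smul_inv_norm hy0, by
    rw [real_inner_smul_left, Submodule.mem_orthogonal_singleton_iff_inner_left.mp hy, mul_zero]⟩

lemma one_lt_dist_of_inner_eq_zero {x c : E} (hx : ‖x‖ = 1) (hxc : ⟪x, c⟫_ℝ = 0) (hc : c ≠ 0) :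
    1 < dist x c := by
  have hsq : ‖x - c‖ ^ 2 = 1 + ‖c‖ ^ 2 := by
    rw [norm_sub_sq_real, hx, hxc]; ring
  have hc' : 0 < ‖c‖ := norm_pos_iff.mpr hc
  rw [dist_eq_norm]
  nlinarith [norm_nonneg (x - c)]

lemma midpoint_eq_zero_of_norm_sub_eq_two {u v : E} (hu : ‖u‖ ≤ 1) (hv : ‖v‖ ≤ 1)
    (huv : ‖u - v‖ = 2) : midpoint ℝ u v = 0 := by
  have hsum : ‖u + v‖ ^ 2 ≤ 0 := by
    nlinarith [parallelogram_law_with_norm ℝ u v, norm_nonneg u, norm_nonneg v]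
  have : u + v = 0 := by
    simpa using le_antisymm hsum (sq_nonneg _)
  rw [midpoint_eq_smul_add, this, smul_zero]

theorem false_of_union_eq_closedBall_of_zero_mem [FiniteDimensional ℝ E]
    (hE : 2 ≤ finrank ℝ E) {A B : Set E} (φ : E ≃ᵢ E) (hU : A ∪ B = closedBall 0 1)
    (hAB : Disjoint A B) (hφ : φ '' A = B) (h0 : (0 : E) ∈ A) : False := by
  have hA : ∀ a ∈ A, ‖a‖ ≤ 1 := fun a ha ↦ by
    simpa using hU.subset (Or.inl ha)
  have hB : ∀ b ∈ B, ‖b‖ ≤ 1 := fun b hb ↦ by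
    simpa using hU.subset (Or.inr hb)
  have hφA : ∀ a ∈ A, φ a ∈ B := fun a ha ↦ hφ ▸ Set.mem_image_of_mem φ ha
  have hc : φ 0 ≠ 0 := fun h ↦ hAB.ne_of_mem h0 (hφA 0 h0) h.symm
  obtain ⟨x, hx, hxc⟩ := exists_norm_eq_one_inner_eq_zero hE (φ 0)
  have hmemA : ∀ z : E, ‖z‖ = 1 → ⟪z, φ 0⟫_ℝ = 0 → z ∈ A := by
    intro z hz hzc
    have hzAB : z ∈ A ∪ B := hU ▸ (by simpa using hz.le)
    refine hzAB.resolve_right fun hzB ↦ ?_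
    obtain ⟨a, ha, rfl⟩ := hφ ▸ hzB
    have : dist (φ a) (φ 0) ≤ 1 := by simpa [φ.dist_eq] using hA a ha
    exact (one_lt_dist_of_inner_eq_zero hz hzc hc).not_ge this
  have hxA : x ∈ A := hmemA x hx hxc
  have hnxA : -x ∈ A := hmemA (-x) (by rw [norm_neg, hx]) (by rw [inner_neg_left, hxc, neg_zero])
  have hdist : ‖φ x - φ (-x)‖ = 2 := by
    rw [← dist_eq_norm, φ.dist_eq, dist_eq_norm, sub_neg_eq_add, ← two_smul ℝ, norm_smul, hx]
    norm_num
  have hmid : φ 0 = midpoint ℝ (φ x) (φ (-x)) := by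
    rw [← φ.map_midpoint, midpoint_self_neg]
  exact hc <| hmid.trans <|
    midpoint_eq_zero_of_norm_sub_eq_two (hB _ (hφA x hxA)) (hB _ (hφA _ hnxA)) hdist

/-- The closed unit disk in ℝ² cannot be partitioned into two disjoint congruent pieces. -/
theorem stmt_0 :
    ¬ ∃ (A B : Set (EuclideanSpace ℝ (Fin 2)))
      (φ : EuclideanSpace ℝ (Fin 2) ≃ᵢ EuclideanSpace ℝ (Fin 2)),
      A ∪ B = Metric.closedBall (0 : EuclideanSpace ℝ (Fin 2)) 1 ∧
      A ∩ B = ∅ ∧ φ '' A = B := by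
  rintro ⟨A, B, φ, hU, hI, hφ⟩
  have hE : 2 ≤ finrank ℝ (EuclideanSpace ℝ (Fin 2)) := by simp
  have hAB : Disjoint A B := Set.disjoint_iff_inter_eq_empty.mpr hI
  have h0 : (0 : EuclideanSpace ℝ (Fin 2)) ∈ A ∪ B := hU ▸ mem_closedBall_self zero_le_one
  rcases h0 with h0 | h0
  · exact false_of_union_eq_closedBall_of_zero_mem hE φ hU hAB hφ h0
  · refine false_of_union_eq_closedBall_of_zero_mem hE φ.symm (Set.union_comm A B ▸ hU)
      hAB.symm ?_ h0
    rw [← hφ, φ.image_symm, φ.injective.preimage_image]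
end

section
/- Let M ∈ 𝓜 be an orthogonal matrix with trace 4p where p ≠ 1. Then I − M is invertible and (I − M)⁻¹ = (1/(2−2p))·(I − Mᵀ). -/
/-!
The matrices of 𝓜 are the left multiplications by quaternions, so `M + Mᵀ` is the scalar
`(tr M / 2) • 1`. For orthogonal `M` this turns `(1 - M) * (1 - Mᵀ) = 2 - (M + Mᵀ)` into a
nonzero scalar when `tr M ≠ 4`, which exhibits `(1 - M)⁻¹` as a multiple of `1 - Mᵀ`.
-/

open Matrix

/-- The set 𝓜 of quaternion-like 4×4 real matrices. -/
def Mset : Set (Matrix (Fin 4) (Fin 4) ℝ) :=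
  { M | ∃ a b c d : ℝ,
      M = !![a, -b, -c, -d;
             b,  a, -d,  c;
             c,  d,  a, -b;
             d, -c,  b,  a] }

theorem add_transpose_eq_smul_one_of_mem_Mset {M : Matrix (Fin 4) (Fin 4) ℝ} (hM : M ∈ Mset) :
    M + Mᵀ = (M.trace / 2) • 1 := by
  obtain ⟨a, b, c, d, rfl⟩ := hM
  ext i j
  fin_cases i <;> fin_cases j <;>
    simp [Matrix.trace, Fin.sum_univ_four] <;> ring

theorem one_sub_mul_one_sub_eq_smul_one {R A : Type*} [CommRing R] [Ring A] [Module R A]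
    {x y : A} {s : R} (hmul : x * y = 1) (hadd : x + y = s • 1) :
    (1 - x) * (1 - y) = (2 - s) • 1 := by
  calc (1 - x) * (1 - y) = 1 + x * y - (x + y) := by noncomm_ring
    _ = (2 - s) • 1 := by rw [hmul, hadd, sub_smul, two_smul]

theorem Matrix.isUnit_and_inv_eq_of_mul_eq_smul_one {n K : Type*} [Fintype n] [DecidableEq n]
    [Field K] {A B : Matrix n n K} {c : K} (hc : c ≠ 0) (h : A * B = c • 1) :
    IsUnit A ∧ A⁻¹ = c⁻¹ • B := by
  have hright : A * (c⁻¹ • B) = 1 := by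
    rw [Matrix.mul_smul, h, smul_smul, inv_mul_cancel₀ hc, one_smul]
  exact ⟨(Matrix.isUnit_iff_isUnit_det _).mpr (Matrix.isUnit_det_of_right_inverse hright),
    Matrix.inv_eq_right_inv hright⟩

/-- If `M ∈ 𝓜` is orthogonal with trace `4p`, `p ≠ 1`, then `I - M` is invertible
and `(I - M)⁻¹ = (1/(2-2p)) • (I - Mᵀ)`. -/
theorem stmt_3 (M : Matrix (Fin 4) (Fin 4) ℝ) (hM : M ∈ Mset)
    (horth : M * Mᵀ = 1) (p : ℝ) (htr : Matrix.trace M = 4 * p) (hp : p ≠ 1) :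
    IsUnit (1 - M) ∧ (1 - M)⁻¹ = (1 / (2 - 2 * p)) • (1 - Mᵀ) := by
  have hsum : M + Mᵀ = (2 * p) • 1 := by
    rw [add_transpose_eq_smul_one_of_mem_Mset hM, htr]
    ring_nf
  have hne : 2 - 2 * p ≠ 0 := fun h => hp (by linarith)
  rw [one_div]
  exact Matrix.isUnit_and_inv_eq_of_mul_eq_smul_one hne (one_sub_mul_one_sub_eq_smul_one horth hsum)
end

section
/- Let θ be such that cos θ is transcendental over ℚ, and let A, B ∈ SO(4) be the block rotations A = diag(R(θ), R(θ)) (rotation by θ in the (1,2)-plane and in the (3,4)-plane) and B the rotation by θ in the (1,4)-plane and the (2,3)-plane as given. Then every element U ≠ I of the group generated by A and B has 0 as its only fixed point, i.e., 1 is not an eigenvalue of U. -/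
open Matrix Real

/-- The rotation `A = diag(R(θ), R(θ))`. -/
noncomputable def matA (θ : ℝ) : Matrix (Fin 4) (Fin 4) ℝ :=
  !![cos θ, -sin θ, 0, 0;
     sin θ,  cos θ, 0, 0;
     0, 0, cos θ, -sin θ;
     0, 0, sin θ,  cos θ]

/-- The rotation `B` by θ in the (1,4)- and (2,3)-planes. -/
noncomputable def matB (θ : ℝ) : Matrix (Fin 4) (Fin 4) ℝ :=
  !![cos θ, 0, 0, -sin θ;
     0, cos θ, -sin θ, 0;
     0, sin θ,  cos θ, 0;
     sin θ, 0, 0,  cos θ]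

/-! `A` and `B` are left multiplications by the unit quaternions `cos θ + sin θ i` and
`cos θ + sin θ k`, so every element of `⟨A, B⟩` is left multiplication by some quaternion `u`.
If `u ≠ 1` then `(u - 1) y = 0` forces `y = 0`, as `ℍ` has no zero divisors. -/

open Quaternion

namespace Algebra

variable {R S ι : Type*} [CommRing R] [Fintype ι] [DecidableEq ι]

theorem eq_zero_of_leftMulMatrix_mulVec_eq_self [Ring S] [Algebra R S] [NoZeroDivisors S]
    (b : Module.Basis ι R S) {u : S} (hu : u ≠ 1) {x : ι → R}
    (hx : leftMulMatrix b u *ᵥ x = x) : x = 0 := by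
  obtain ⟨y, rfl⟩ := b.equivFun.surjective x
  rw [Module.Basis.equivFun_apply] at hx ⊢
  have hfix : u * y = y :=
    b.repr.injective <| DFunLike.coe_injective <| by rw [← leftMulMatrix_mulVec_repr, hx]
  have hy : (u - 1) * y = 0 := by rw [sub_mul, hfix, one_mul, sub_self]
  simp [(mul_eq_zero.1 hy).resolve_left (sub_ne_zero.2 hu)]

theorem leftMulMatrix_inv [DivisionRing S] [Algebra R S] (b : Module.Basis ι R S)
    {q : S} (hq : q ≠ 0) : leftMulMatrix b q⁻¹ = (leftMulMatrix b q)⁻¹ :=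
  (Matrix.inv_eq_left_inv (by rw [← map_mul, inv_mul_cancel₀ hq, map_one])).symm

end Algebra

namespace Quaternion

/-- A copy of `QuaternionAlgebra.basisOneIJK` on `ℍ[R]`: the instances of `ℍ[R,-1,0,-1]` do not
unify with those of `ℍ[R]` at reducible transparency, so that basis breaks `rw` and `simp`. -/
noncomputable def basisOneIJK (R : Type*) [CommRing R] : Module.Basis (Fin 4) R ℍ[R] :=
  .ofEquivFun
    { equivTuple R with
      map_add' _ _ := by ext i; fin_cases i <;> rfl
      map_smul' _ _ := by ext i; fin_cases i <;> rfl }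

variable {R : Type*} [CommRing R]

@[simp]
theorem coe_basisOneIJK_repr (q : ℍ[R]) :
    ⇑((basisOneIJK R).repr q) = ![q.re, q.imI, q.imJ, q.imK] := rfl

theorem leftMulMatrix_basisOneIJK (q : ℍ[R]) :
    Algebra.leftMulMatrix (basisOneIJK R) q =
      !![q.re, -q.imI, -q.imJ, -q.imK;
         q.imI, q.re, -q.imK, q.imJ;
         q.imJ, q.imK, q.re, -q.imI;
         q.imK, -q.imJ, q.imI, q.re] := by
  refine (Matrix.ext_iff_mulVec.2 fun v => ?_).symm
  obtain ⟨y, rfl⟩ := (basisOneIJK R).equivFun.surjective v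
  rw [Module.Basis.equivFun_apply, Algebra.leftMulMatrix_mulVec_repr]
  ext i
  fin_cases i <;>
    simp [Matrix.mulVec, dotProduct, Fin.sum_univ_four, re_mul, imI_mul, imJ_mul, imK_mul] <;>
    ring

end Quaternion

-- Named, since an anonymous constructor `⟨a, b, c, d⟩` elaborates at type `ℍ[ℝ,-1,0,-1]`.
noncomputable def rotorI (θ : ℝ) : ℍ[ℝ] := ⟨cos θ, sin θ, 0, 0⟩

noncomputable def rotorK (θ : ℝ) : ℍ[ℝ] := ⟨cos θ, 0, 0, sin θ⟩

theorem rotorI_ne_zero (θ : ℝ) : rotorI θ ≠ 0 := fun h => by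
  have h2 := congrArg normSq h
  rw [normSq_def', map_zero] at h2
  simp [rotorI] at h2

theorem rotorK_ne_zero (θ : ℝ) : rotorK θ ≠ 0 := fun h => by
  have h2 := congrArg normSq h
  rw [normSq_def', map_zero] at h2
  simp [rotorK] at h2

theorem matA_eq_leftMulMatrix (θ : ℝ) :
    matA θ = Algebra.leftMulMatrix (Quaternion.basisOneIJK ℝ) (rotorI θ) := by
  rw [Quaternion.leftMulMatrix_basisOneIJK]
  simp [matA, rotorI]

theorem matB_eq_leftMulMatrix (θ : ℝ) :
    matB θ = Algebra.leftMulMatrix (Quaternion.basisOneIJK ℝ) (rotorK θ) := by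
  rw [Quaternion.leftMulMatrix_basisOneIJK]
  simp [matB, rotorK]

theorem stmt_6_general (θ : ℝ)
    (U : Matrix (Fin 4) (Fin 4) ℝ)
    (hU : U ∈ Submonoid.closure ({matA θ, matB θ, (matA θ)⁻¹, (matB θ)⁻¹} :
      Set (Matrix (Fin 4) (Fin 4) ℝ)))
    (hne : U ≠ 1) :
    ∀ x : Fin 4 → ℝ, U.mulVec x = x → x = 0 := by
  set b := Quaternion.basisOneIJK ℝ
  have hgen : ({matA θ, matB θ, (matA θ)⁻¹, (matB θ)⁻¹} : Set (Matrix (Fin 4) (Fin 4) ℝ)) ⊆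
      MonoidHom.mrange (Algebra.leftMulMatrix b : ℍ[ℝ] →* Matrix (Fin 4) (Fin 4) ℝ) := by
    rw [matA_eq_leftMulMatrix, matB_eq_leftMulMatrix,
      ← Algebra.leftMulMatrix_inv b (rotorI_ne_zero θ),
      ← Algebra.leftMulMatrix_inv b (rotorK_ne_zero θ)]
    rintro _ (rfl | rfl | rfl | rfl) <;> exact ⟨_, rfl⟩
  obtain ⟨u, rfl⟩ := Submonoid.closure_le.2 hgen hU
  intro x hx
  exact Algebra.eq_zero_of_leftMulMatrix_mulVec_eq_self b (by rintro rfl; exact hne (map_one _)) hx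

/-- If `cos θ` is transcendental, every element `U ≠ 1` of the group generated by
`A` and `B` has the origin as its only fixed point. -/
theorem stmt_6 (θ : ℝ) (htr : Transcendental ℚ (cos θ))
    (U : Matrix (Fin 4) (Fin 4) ℝ)
    (hU : U ∈ Submonoid.closure ({matA θ, matB θ, (matA θ)⁻¹, (matB θ)⁻¹} :
      Set (Matrix (Fin 4) (Fin 4) ℝ)))
    (hne : U ≠ 1) :
    ∀ x : Fin 4 → ℝ, U.mulVec x = x → x = 0 :=
  stmt_6_general θ U hU hne
end

section
/- With A, B ∈ SO(4) as above (cos θ transcendental), the group K generated by A and B is a free group of rank 2: no nonempty reduced word in A±1, B±1 equals the identity matrix. -/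
/-!
Identify `ℝ⁴` with `ℂ²` through `v ↦ (v₀ + v₁ i, v₂ - v₃ i)` and put `λ = e^{iθ}`. There
`λA = diag(λ², 1)` and `λB = ½ [[λ² + 1, 1 - λ²], [1 - λ², λ² + 1]]`, and similarly for the inverses,
so for a word `w` of length `n` the vector `λⁿ w (1, 2)` is the value at `λ` of a vector `P_w` of
rational polynomials of degree `≤ 2n`. As `λ` is transcendental together with `cos θ`, `w = 1`
forces `P_w = Xⁿ (1, 2)`, whose coefficients in degree `2n` vanish.

On the other hand, the degree-2 coefficients of the four letter matrices are the orthogonal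
projections onto the lines spanned by `(1, 0)`, `(0, 1)`, `(1, -1)`, `(1, 1)`, and the kernel of
each is the line of the inverse letter. So along a reduced word, starting from `(1, 2)`, which no
projection kills, the top coefficients of `P_w` stay a nonzero multiple of the direction of the first
letter (ping-pong).
-/

open Matrix Real

open Polynomial

section LeadingCoefficients

variable {R ι κ : Type*} [Semiring R] [Fintype κ] {M : Matrix ι κ R[X]} {v : κ → R[X]} {m n : ℕ}

theorem Matrix.natDegree_mulVec_le (hM : ∀ i j, (M i j).natDegree ≤ m)
    (hv : ∀ j, (v j).natDegree ≤ n) (i : ι) : ((M *ᵥ v) i).natDegree ≤ m + n :=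
  natDegree_sum_le_of_forall_le _ _ fun j _ => natDegree_mul_le_of_le (hM i j) (hv j)

theorem Matrix.coeff_mulVec_add_eq_of_natDegree_le (hM : ∀ i j, (M i j).natDegree ≤ m)
    (hv : ∀ j, (v j).natDegree ≤ n) (i : ι) :
    ((M *ᵥ v) i).coeff (m + n) = (M.map (coeff · m) *ᵥ fun j => (v j).coeff n) i := by
  simp only [mulVec, dotProduct, finsetSum_coeff, map_apply,
    coeff_mul_add_eq_of_natDegree_le (hM i _) (hv _)]

end LeadingCoefficients

inductive Letter | A | Ainv | B | Binv

namespace Letter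

def inv : Letter → Letter
  | A => Ainv
  | Ainv => A
  | B => Binv
  | Binv => B

noncomputable def toMatrix (θ : ℝ) : Letter → Matrix (Fin 4) (Fin 4) ℝ
  | A => matA θ
  | Ainv => matA (-θ)
  | B => matB θ
  | Binv => matB (-θ)

noncomputable def polyMatrix : Letter → Matrix (Fin 2) (Fin 2) ℚ[X]
  | A => !![X ^ 2, 0; 0, 1]
  | Ainv => !![1, 0; 0, X ^ 2]
  | B => (2⁻¹ : ℚ) • !![X ^ 2 + 1, 1 - X ^ 2; 1 - X ^ 2, X ^ 2 + 1]
  | Binv => (2⁻¹ : ℚ) • !![X ^ 2 + 1, X ^ 2 - 1; X ^ 2 - 1, X ^ 2 + 1]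

def dir : Letter → Fin 2 → ℚ
  | A => ![1, 0]
  | Ainv => ![0, 1]
  | B => ![1, -1]
  | Binv => ![1, 1]

lemma natDegree_polyMatrix_le (L : Letter) (i j : Fin 2) : (L.polyMatrix i j).natDegree ≤ 2 := by
  cases L <;> fin_cases i <;> fin_cases j <;> simp [polyMatrix] <;> compute_degree!

lemma polyMatrix_map_coeff_two_mulVec (L : Letter) (v : Fin 2 → ℚ) :
    L.polyMatrix.map (coeff · 2) *ᵥ v = (L.dir ⬝ᵥ v / L.dir ⬝ᵥ L.dir) • L.dir := by
  cases L <;> ext i <;> fin_cases i <;> simp [polyMatrix, dir, mulVec, dotProduct, coeff_one] <;> ring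

lemma dir_dotProduct_dir_ne_zero {L L' : Letter} (h : L' ≠ L.inv) : L.dir ⬝ᵥ L'.dir ≠ 0 := by
  cases L <;> cases L' <;> simp_all [inv, dir, dotProduct]

lemma dir_dotProduct_ne_zero (L : Letter) : L.dir ⬝ᵥ ![1, 2] ≠ 0 := by
  cases L <;> norm_num [dir, dotProduct]

lemma self_ne_inv (L : Letter) : L ≠ L.inv := by
  cases L <;> simp [inv]

lemma toMatrix_mul_toMatrix_inv (θ : ℝ) (L : Letter) : L.toMatrix θ * L.inv.toMatrix θ = 1 := by
  have h := Real.sin_sq_add_cos_sq θ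
  cases L <;> ext i j <;> fin_cases i <;> fin_cases j <;>
    simp [toMatrix, inv, matA, matB, mul_apply, Fin.sum_univ_four, one_apply] <;> grind

lemma exists_toMatrix_eq {θ : ℝ} {x : Matrix (Fin 4) (Fin 4) ℝ}
    (hx : x ∈ ({matA θ, matB θ, (matA θ)⁻¹, (matB θ)⁻¹} : Set (Matrix (Fin 4) (Fin 4) ℝ))) :
    ∃ L : Letter, L.toMatrix θ = x := by
  obtain rfl | rfl | rfl | rfl := hx
  exacts [⟨A, rfl⟩, ⟨B, rfl⟩, ⟨Ainv, (inv_eq_right_inv (toMatrix_mul_toMatrix_inv θ A)).symm⟩,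
    ⟨Binv, (inv_eq_right_inv (toMatrix_mul_toMatrix_inv θ B)).symm⟩]

end Letter

open Letter

noncomputable def wordPoly : List Letter → Fin 2 → ℚ[X]
  | [] => ![1, 2]
  | L :: w => L.polyMatrix *ᵥ wordPoly w

lemma natDegree_wordPoly_le : ∀ (w : List Letter) (i : Fin 2),
    (wordPoly w i).natDegree ≤ 2 * w.length
  | [], i => by fin_cases i <;> simp [wordPoly]
  | L :: w, i => by
    rw [List.length_cons, mul_add_one, add_comm]
    exact Matrix.natDegree_mulVec_le L.natDegree_polyMatrix_le (natDegree_wordPoly_le w) i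

noncomputable def topCoeffs (w : List Letter) : Fin 2 → ℚ :=
  fun i => (wordPoly w i).coeff (2 * w.length)

lemma topCoeffs_cons (L : Letter) (w : List Letter) :
    topCoeffs (L :: w) = L.polyMatrix.map (coeff · 2) *ᵥ topCoeffs w := by
  ext i
  rw [topCoeffs, List.length_cons, mul_add_one, add_comm]
  exact Matrix.coeff_mulVec_add_eq_of_natDegree_le L.natDegree_polyMatrix_le
    (natDegree_wordPoly_le w) i

lemma exists_topCoeffs_eq_smul_dir : ∀ (L : Letter) (w : List Letter),
    (L :: w).IsChain (fun L L' => L' ≠ L.inv) → ∃ c : ℚ, c ≠ 0 ∧ topCoeffs (L :: w) = c • L.dir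
  | L, [], _ => by
    have h : topCoeffs [] = ![1, 2] := by ext i; fin_cases i <;> simp [topCoeffs, wordPoly]
    refine ⟨L.dir ⬝ᵥ ![1, 2] / L.dir ⬝ᵥ L.dir,
      div_ne_zero L.dir_dotProduct_ne_zero (dir_dotProduct_dir_ne_zero L.self_ne_inv), ?_⟩
    rw [topCoeffs_cons, h, polyMatrix_map_coeff_two_mulVec]
  | L, L' :: w, hred => by
    rw [List.isChain_cons_cons] at hred
    obtain ⟨c, hc, h⟩ := exists_topCoeffs_eq_smul_dir L' w hred.2
    refine ⟨c * (L.dir ⬝ᵥ L'.dir / L.dir ⬝ᵥ L.dir), mul_ne_zero hc (div_ne_zero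
      (dir_dotProduct_dir_ne_zero hred.1) (dir_dotProduct_dir_ne_zero L.self_ne_inv)), ?_⟩
    rw [topCoeffs_cons, h, polyMatrix_map_coeff_two_mulVec, dotProduct_smul, smul_eq_mul,
      mul_div_assoc]

lemma wordPoly_ne_X_pow_smul {w : List Letter} (hne : w ≠ [])
    (hred : w.IsChain (fun L L' => L' ≠ L.inv)) :
    wordPoly w ≠ (X ^ w.length : ℚ[X]) • ![1, 2] := by
  obtain ⟨L, w, rfl⟩ := List.exists_cons_of_ne_nil hne
  obtain ⟨c, hc, htop⟩ := exists_topCoeffs_eq_smul_dir L w hred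
  intro h
  have hzero : topCoeffs (L :: w) = 0 := by
    ext i
    have hpos : 2 * (w.length + 1) - (w.length + 1) ≠ 0 := by omega
    simp only [topCoeffs, h, Pi.smul_apply, smul_eq_mul, List.length_cons]
    rw [coeff_X_pow_mul', if_pos (by omega)]
    fin_cases i
    · simp [coeff_one, hpos]
    · simp [← C_ofNat, coeff_C, hpos]
  rw [htop, smul_eq_zero] at hzero
  obtain hc0 | hdir := hzero
  · exact hc hc0
  · exact dir_dotProduct_dir_ne_zero L.self_ne_inv (by simp [hdir])

section ComplexCoordinates

open Complex

noncomputable def toComplexPair (v : Fin 4 → ℝ) : Fin 2 → ℂ := ![v 0 + v 1 * I, v 2 - v 3 * I]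

lemma Letter.polyMatrix_map_aeval_mulVec (θ : ℝ) (L : Letter) (v : Fin 4 → ℝ) :
    L.polyMatrix.map (aeval (cexp (θ * I))) *ᵥ toComplexPair v =
      cexp (θ * I) • toComplexPair (L.toMatrix θ *ᵥ v) := by
  have hcs := Complex.cos_sq_add_sin_sq (θ : ℂ)
  have hI := I_sq
  rw [exp_mul_I]
  cases L <;> ext i <;> fin_cases i <;>
    simp [polyMatrix, toMatrix, matA, matB, toComplexPair, mulVec, dotProduct, Fin.sum_univ_four,
      Rat.smul_def] <;> grind

lemma aeval_wordPoly (θ : ℝ) : ∀ w : List Letter,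
    (fun i => aeval (cexp (θ * I)) (wordPoly w i)) =
      cexp (θ * I) ^ w.length • toComplexPair ((w.map (toMatrix θ)).prod *ᵥ ![1, 0, 2, 0])
  | [] => by ext i; fin_cases i <;> simp [wordPoly, toComplexPair, map_ofNat]
  | L :: w => by
    ext i
    have h := RingHom.map_mulVec (aeval (R := ℚ) (cexp (θ * I))).toRingHom L.polyMatrix
      (wordPoly w) i
    simp only [AlgHom.toRingHom_eq_coe, RingHom.coe_coe] at h
    rw [wordPoly, h, Function.comp_def, aeval_wordPoly θ w, mulVec_smul,
      L.polyMatrix_map_aeval_mulVec, List.map_cons, List.prod_cons, ← mulVec_mulVec,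
      List.length_cons, pow_succ, mul_smul]

lemma transcendental_exp_mul_I {θ : ℝ} (h : Transcendental ℚ (Real.cos θ)) :
    Transcendental ℚ (cexp (θ * I)) := by
  intro hexp
  refine h ((isAlgebraic_algebraMap_iff (algebraMap ℝ ℂ).injective).mp ?_)
  have hcos : algebraMap ℝ ℂ (Real.cos θ) = (2⁻¹ : ℚ) • (cexp (θ * I) + (cexp (θ * I))⁻¹) := by
    simp [Complex.cos, Complex.exp_neg, Rat.smul_def]
    ring
  rw [hcos]
  exact (hexp.add hexp.inv).smul _

end ComplexCoordinates

lemma wordPoly_eq_of_prod_eq_one {θ : ℝ} (htr : Transcendental ℚ (Complex.exp (θ * Complex.I)))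
    {w : List Letter} (h : (w.map (toMatrix θ)).prod = 1) :
    wordPoly w = (X ^ w.length : ℚ[X]) • ![1, 2] := by
  funext i
  apply transcendental_iff_injective.mp htr
  have hi := congrFun (aeval_wordPoly θ w) i
  rw [h, one_mulVec] at hi
  rw [hi]
  fin_cases i <;> simp [toComplexPair, map_ofNat]

/-- If `cos θ` is transcendental, the group generated by `A` and `B` is free of rank 2:
no nonempty reduced word in `A^{±1}, B^{±1}` equals the identity. -/
theorem stmt_7 (θ : ℝ) (htr : Transcendental ℚ (cos θ))
    (l : List (Matrix (Fin 4) (Fin 4) ℝ)) (hne : l ≠ [])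
    (hmem : ∀ x ∈ l, x ∈ ({matA θ, matB θ, (matA θ)⁻¹, (matB θ)⁻¹} :
      Set (Matrix (Fin 4) (Fin 4) ℝ)))
    (hred : l.Chain' (fun x y => x * y ≠ 1)) :
    l.prod ≠ 1 := by
  obtain ⟨w, rfl⟩ : l ∈ Set.range (List.map (toMatrix θ)) := by
    rw [Set.range_list_map]
    exact fun x hx => exists_toMatrix_eq (hmem x hx)
  have hw : w.IsChain (fun L L' => L' ≠ L.inv) :=
    List.isChain_of_isChain_map _
      (fun L _ h hL' => h (by rw [hL']; exact toMatrix_mul_toMatrix_inv θ L)) hred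
  exact fun hprod => wordPoly_ne_X_pow_smul (by rintro rfl; exact hne rfl) hw
    (wordPoly_eq_of_prod_eq_one (transcendental_exp_mul_I htr) hprod)
end

section
/- Let U ∈ SO(4) be such that I − U is invertible, and suppose U lies in the set 𝓜 (so U + Uᵀ = (tr U / 2)·I). If there is no x ≠ 0 with Ux = x, and U ≠ I, then for all b ∈ ℝ⁴ the unique fixed point of x ↦ Ux + b is (1/(2 − tr(U)/2))·(I − Uᵀ) b. -/
open Matrix

/-- For a fixed-point-free `U ∈ 𝓜 ∩ SO(4)`, the unique fixed point of `x ↦ Ux + b`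
is `(1/(2 - tr U / 2)) • (I - Uᵀ) b`. -/
theorem stmt_15 (U : Matrix (Fin 4) (Fin 4) ℝ) (hU : U ∈ Mset)
    (horth : U * Uᵀ = 1) (hdet : U.det = 1)
    (hfix : ∀ x : Fin 4 → ℝ, U.mulVec x = x → x = 0) (hne : U ≠ 1) :
    ∀ b : Fin 4 → ℝ,
      U.mulVec ((1 / (2 - Matrix.trace U / 2)) • (1 - Uᵀ).mulVec b) + b =
        (1 / (2 - Matrix.trace U / 2)) • (1 - Uᵀ).mulVec b ∧
      ∀ y : Fin 4 → ℝ, U.mulVec y + b = y →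
        y = (1 / (2 - Matrix.trace U / 2)) • (1 - Uᵀ).mulVec b := by
  obtain ⟨a, b, c, d, hUdef⟩ := hU
  -- entry (0,0) of orthogonality gives the norm equation
  have hsum : a * a + b * b + c * c + d * d = 1 := by
    have h := congrFun (congrFun horth 0) 0
    rw [hUdef] at h
    simpa [Matrix.mul_apply, Fin.sum_univ_four, Matrix.one_apply] using h
  have ha : a ≠ 1 := by
    intro h
    apply hne
    have hb : b = 0 := by nlinarith
    have hc : c = 0 := by nlinarith
    have hd : d = 0 := by nlinarith
    subst h hb hc hd
    rw [hUdef]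
    ext i j
    fin_cases i <;> fin_cases j <;>
      simp [Matrix.one_apply, Matrix.vecHead, Matrix.vecTail]
  have htr : Matrix.trace U = 4 * a := by
    rw [hUdef]
    simp [Matrix.trace, Fin.sum_univ_four]
    ring
  have hUUt : U + Uᵀ = (2 * a) • (1 : Matrix (Fin 4) (Fin 4) ℝ) := by
    rw [hUdef]
    ext i j
    fin_cases i <;> fin_cases j <;>
      simp [Matrix.transpose_apply, Matrix.one_apply, Matrix.vecHead, Matrix.vecTail] <;>
      ring
  have hkey : (1 - U) * (1 - Uᵀ) = (2 - 2 * a) • (1 : Matrix (Fin 4) (Fin 4) ℝ) := by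
    have expand : (1 - U) * (1 - Uᵀ) = 1 - (U + Uᵀ) + U * Uᵀ := by noncomm_ring
    rw [expand, horth, hUUt]
    module
  have hk : (2 : ℝ) - 2 * a ≠ 0 := by
    intro h
    apply ha
    linarith
  intro v
  set x : Fin 4 → ℝ := (1 / (2 - Matrix.trace U / 2)) • (1 - Uᵀ).mulVec v with hx
  have hc : (1 : ℝ) / (2 - Matrix.trace U / 2) = 1 / (2 - 2 * a) := by
    rw [htr]; ring_nf
  have hfixed : (1 - U).mulVec x = v := by
    rw [hx, hc, Matrix.mulVec_smul, Matrix.mulVec_mulVec, hkey]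
    rw [Matrix.smul_mulVec, Matrix.one_mulVec, smul_smul]
    rw [one_div, inv_mul_cancel₀ hk, one_smul]
  have hfixed' : U.mulVec x + v = x := by
    have h2 : x - U.mulVec x = v := by
      rw [← hfixed, Matrix.sub_mulVec, Matrix.one_mulVec]
    rw [← h2]; abel
  refine ⟨hfixed', fun y hy => ?_⟩
  have h3 : (1 - U).mulVec y = v := by
    rw [Matrix.sub_mulVec, Matrix.one_mulVec, eq_sub_of_add_eq hy]
    abel
  have h4 : U.mulVec (y - x) = y - x := by
    have h5 : (1 - U).mulVec (y - x) = 0 := by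
      rw [Matrix.mulVec_sub, h3, hfixed, sub_self]
    have h6 := h5
    rw [Matrix.sub_mulVec, Matrix.one_mulVec, sub_eq_zero] at h6
    exact h6.symm
  have h7 := hfix _ h4
  rw [sub_eq_zero] at h7
  exact h7
end
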